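/- Let L be a Lie superalgebra over a field k of characteristic 2, i.e., a ℤ/2-graded Lie algebra L = L₀ ⊕ L₁ with a map Q : L₁ → L₀ satisfying Q(λy) = λ²Q(y), Q(y₁+y₂) − Q(y₁) − Q(y₂) = [y₁,y₂], and [Q(y),x] = [y,[y,x]]. Then for every y ∈ L₁, the element C(y) := y² − Q(y) is central in the universal enveloping algebra U(L), and the map y ↦ C(y) satisfies C(y₁+y₂) = C(y₁) + C(y₂) and C(λy) = λ²C(y). -/

import Mathlib

/-!
In characteristic 2 the inner derivation of an associative algebra satisfies
`ad(a)² = ad(a²)`, so `ad(y²)` agrees with `ad(Q y) = ad(y)²` on the generators of `U(L)`,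
making `y² - Q(y)` central. Likewise `(y₁ + y₂)² = y₁² + y₂² + [y₁, y₂]`, and the
cross term `[y₁, y₂]` is exactly the polarization of `Q`, so `C` is additive.
-/

open UniversalEnvelopingAlgebra

attribute [local instance 100] LieRing.ofAssociativeRing

theorem two_eq_zero_of_charP_two (k A : Type*) [CommRing k] [CharP k 2] [Ring A]
    [Algebra k A] : (2 : A) = 0 := by
  rw [← map_ofNat (algebraMap k A) 2, CharTwo.two_eq_zero, map_zero]

section CharTwoRing

variable {A : Type*} [Ring A]

theorem lie_lie_self_eq_lie_mul_self (h2 : (2 : A) = 0) (a b : A) :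
    ⁅a, ⁅a, b⁆⁆ = ⁅a * a, b⁆ := by
  rw [← sub_eq_zero]
  calc ⁅a, ⁅a, b⁆⁆ - ⁅a * a, b⁆ = 2 * (b * a * a - a * b * a) := by
        simp only [Ring.lie_def]; noncomm_ring
    _ = 0 := by rw [h2, zero_mul]

theorem add_mul_self_eq_add_lie (h2 : (2 : A) = 0) (a b : A) :
    (a + b) * (a + b) = a * a + b * b + ⁅a, b⁆ := by
  rw [← sub_eq_zero]
  calc (a + b) * (a + b) - (a * a + b * b + ⁅a, b⁆) = 2 * (b * a) := by
        rw [Ring.lie_def]; noncomm_ring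
    _ = 0 := by rw [h2, zero_mul]

end CharTwoRing

theorem UniversalEnvelopingAlgebra.commute_of_forall_commute_ι {R L : Type*} [CommRing R]
    [LieRing L] [LieAlgebra R L] {z : UniversalEnvelopingAlgebra R L}
    (h : ∀ x : L, Commute (ι R x) z) (u : UniversalEnvelopingAlgebra R L) : Commute u z := by
  obtain ⟨t, rfl⟩ := RingCon.mkₐ_surjective (α := R) (ringCon R L) u
  induction t using TensorAlgebra.induction with
  | algebraMap r => exact Algebra.commute_algebraMap_left r z
  | ι x => exact h x
  | mul a b ha hb => rw [map_mul]; exact ha.mul_left hb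
  | add a b ha hb => rw [map_add]; exact ha.add_left hb

theorem stmt12_general (k : Type*) [Field k] [CharP k 2]
    (L : Type*) [LieRing L] [LieAlgebra k L]
    (L₁ : Submodule k L)
    (Q : L → L)
    (hQsmul : ∀ (c : k), ∀ y ∈ L₁, Q (c • y) = (c ^ 2) • Q y)
    (hQadd : ∀ y₁ ∈ L₁, ∀ y₂ ∈ L₁, Q (y₁ + y₂) - Q y₁ - Q y₂ = ⁅y₁, y₂⁆)
    (hQbr : ∀ y ∈ L₁, ∀ x : L, ⁅Q y, x⁆ = ⁅y, ⁅y, x⁆⁆) :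
    (∀ y ∈ L₁, ∀ u : UniversalEnvelopingAlgebra k L,
      u * (ι k y * ι k y - ι k (Q y)) = (ι k y * ι k y - ι k (Q y)) * u) ∧
    (∀ y₁ ∈ L₁, ∀ y₂ ∈ L₁,
      ι k (y₁ + y₂) * ι k (y₁ + y₂) - ι k (Q (y₁ + y₂)) =
        (ι k y₁ * ι k y₁ - ι k (Q y₁)) + (ι k y₂ * ι k y₂ - ι k (Q y₂))) ∧
    (∀ (c : k), ∀ y ∈ L₁,
      ι k (c • y) * ι k (c • y) - ι k (Q (c • y)) =
        (c ^ 2) • (ι k y * ι k y - ι k (Q y))) := by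
  have h2 := two_eq_zero_of_charP_two k (UniversalEnvelopingAlgebra k L)
  refine ⟨fun y hy u => ?_, fun y₁ hy₁ y₂ hy₂ => ?_, fun c y hy => ?_⟩
  · refine commute_of_forall_commute_ι (fun x => (commute_iff_lie_eq.mpr ?_).symm) u
    rw [sub_lie, ← lie_lie_self_eq_lie_mul_self h2, ← LieHom.map_lie, ← LieHom.map_lie,
      ← LieHom.map_lie, hQbr y hy, sub_self]
  · have hQ : Q (y₁ + y₂) = Q y₁ + Q y₂ + ⁅y₁, y₂⁆ := by
      rw [← hQadd y₁ hy₁ y₂ hy₂]; abel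
    rw [hQ, map_add, add_mul_self_eq_add_lie h2, map_add, map_add, LieHom.map_lie]
    abel
  · rw [hQsmul c y hy, map_smul, map_smul, smul_mul_smul_comm, ← sq, smul_sub]

/-- Let `L = L₀ ⊕ L₁` be a Lie superalgebra over a field `k` of
characteristic 2: a ℤ/2-graded Lie algebra with a squaring map `Q : L₁ → L₀`
satisfying `Q(λy) = λ²Q(y)`, `Q(y₁+y₂) − Q(y₁) − Q(y₂) = [y₁,y₂]` and
`[Q(y),x] = [y,[y,x]]`.  Then for every `y ∈ L₁` the element `C(y) := y² − Q(y)` of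
`U(L)` is central, and `C` is additive and satisfies `C(λy) = λ²C(y)` on `L₁`. -/
theorem stmt12 (k : Type*) [Field k] [CharP k 2]
    (L : Type*) [LieRing L] [LieAlgebra k L]
    (L₀ L₁ : Submodule k L) (hcompl : IsCompl L₀ L₁)
    (h00 : ∀ x ∈ L₀, ∀ y ∈ L₀, ⁅x, y⁆ ∈ L₀)
    (h01 : ∀ x ∈ L₀, ∀ y ∈ L₁, ⁅x, y⁆ ∈ L₁)
    (h11 : ∀ x ∈ L₁, ∀ y ∈ L₁, ⁅x, y⁆ ∈ L₀)
    (Q : L → L)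
    (hQmap : ∀ y ∈ L₁, Q y ∈ L₀)
    (hQsmul : ∀ (c : k), ∀ y ∈ L₁, Q (c • y) = (c ^ 2) • Q y)
    (hQadd : ∀ y₁ ∈ L₁, ∀ y₂ ∈ L₁, Q (y₁ + y₂) - Q y₁ - Q y₂ = ⁅y₁, y₂⁆)
    (hQbr : ∀ y ∈ L₁, ∀ x : L, ⁅Q y, x⁆ = ⁅y, ⁅y, x⁆⁆) :
    (∀ y ∈ L₁, ∀ u : UniversalEnvelopingAlgebra k L,
      u * (ι k y * ι k y - ι k (Q y)) = (ι k y * ι k y - ι k (Q y)) * u) ∧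
    (∀ y₁ ∈ L₁, ∀ y₂ ∈ L₁,
      ι k (y₁ + y₂) * ι k (y₁ + y₂) - ι k (Q (y₁ + y₂)) =
        (ι k y₁ * ι k y₁ - ι k (Q y₁)) + (ι k y₂ * ι k y₂ - ι k (Q y₂))) ∧
    (∀ (c : k), ∀ y ∈ L₁,
      ι k (c • y) * ι k (c • y) - ι k (Q (c • y)) =
        (c ^ 2) • (ι k y * ι k y - ι k (Q y))) :=
  stmt12_general k L L₁ Q hQsmul hQadd hQbr
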